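/- Let G be a graph and construct H_G as follows: take 12 vertex-disjoint copies of G indexed G^z_{ij} for 1 ≤ i < j ≤ 4 and z ∈ {a,b}, together with four new vertices v_1, v_2, v_3, v_4, and add all edges from v_i and v_j to every vertex of G^a_{ij} and G^b_{ij}. Then G is 1-CFCN*-choosable if and only if H_G is 2-CFCN*-choosable. -/

import Mathlib

/-!
With singleton lists a CFCN* colouring is the same thing as a perfect code of `G`, a vertex set
meeting every closed neighbourhood exactly once; so `G` is 1-CFCN*-choosable iff it has one.

Given a perfect code `S`, colour every hub `v_i` from its list. In a copy `G^z_{ij}` whose hubs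
received the same colour, colour the vertices of `S` with colours different from it: each copy
vertex then sees the colour of its code vertex exactly once, and the hubs see only themselves.
Copies of hubs with different colours stay uncoloured and see the colour of `v_i` exactly once.

Conversely, colour `H_G` from the lists `{0, 1}`. Two hubs `v_i, v_j` are in the same state
(uncoloured, `0` or `1`). If both are coloured `x`, every vertex of `G^a_{ij}` sees `x` twice, hence
sees the other colour exactly once. If both are uncoloured, the colour that `v_i` sees exactly once
is missing from `G^a_{ij}` or from `G^b_{ij}`, and the vertices of that copy see the other colour
exactly once. Either way, the vertices of that colour in the copy form a perfect code of `G`.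
-/

/-- `G` is `k`-CFCN*-choosable. -/
def CFCNstarChoosable {V : Type*} (G : SimpleGraph V) (k : ℕ) : Prop :=
  ∀ L : V → Finset ℕ, (∀ v, (L v).card = k) →
    ∃ c : V → Option ℕ, (∀ v a, c v = some a → a ∈ L v) ∧
      ∀ v : V, ∃ a, ∃! u, (G.Adj v u ∨ u = v) ∧ c u = some a

/-- The graph `H_G`: twelve disjoint copies `G^z_{ij}` (`1 ≤ i < j ≤ 4`,
`z ∈ {a,b}`) of `G`, plus four vertices `v_1,…,v_4`, with `v_i` and `v_j`
joined to every vertex of `G^a_{ij}` and `G^b_{ij}`. -/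
def HGraph {V : Type*} (G : SimpleGraph V) :
    SimpleGraph (Fin 4 ⊕ ({p : Fin 4 × Fin 4 // p.1 < p.2} × Bool × V)) :=
  SimpleGraph.fromRel (fun x y => match x, y with
    | Sum.inl l, Sum.inr (p, _, _) => l = p.val.1 ∨ l = p.val.2
    | Sum.inr (p, z, u), Sum.inr (q, w, u') => p = q ∧ z = w ∧ G.Adj u u'
    | _, _ => False)

theorem Fin.exists_lt_map_eq_of_card_lt {α : Type*} {n : ℕ} {t : Finset α} (ht : t.card < n)
    {f : Fin n → α} (hf : ∀ i, f i ∈ t) : ∃ i j, i < j ∧ f i = f j := by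
  obtain ⟨i, -, j, -, hne, hij⟩ := Finset.exists_ne_map_eq_of_card_lt_of_maps_to
    (s := Finset.univ) (by simpa using ht) (fun i _ => hf i)
  rcases hne.lt_or_gt with h | h
  exacts [⟨i, j, h, hij⟩, ⟨j, i, h, hij.symm⟩]

namespace SimpleGraph

variable {V : Type*} (G : SimpleGraph V)

def SeesUniquely (c : V → Option ℕ) (v : V) (a : ℕ) : Prop :=
  ∃! u, (G.Adj v u ∨ u = v) ∧ c u = some a

def IsPerfectCode (S : Set V) : Prop :=
  ∀ v, ∃! u, (G.Adj v u ∨ u = v) ∧ u ∈ S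

variable {G}

theorem SeesUniquely.exists_eq_some {c : V → Option ℕ} {v : V} {a : ℕ}
    (h : G.SeesUniquely c v a) : ∃ u, c u = some a :=
  let ⟨u, ⟨_, hu⟩, _⟩ := h
  ⟨u, hu⟩

theorem not_seesUniquely_of_ne {c : V → Option ℕ} {v u₁ u₂ : V} {a : ℕ} (hne : u₁ ≠ u₂)
    (h₁ : G.Adj v u₁ ∨ u₁ = v) (h₂ : G.Adj v u₂ ∨ u₂ = v)
    (hc₁ : c u₁ = some a) (hc₂ : c u₂ = some a) : ¬ G.SeesUniquely c v a :=
  fun h => hne (h.unique ⟨h₁, hc₁⟩ ⟨h₂, hc₂⟩)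

theorem IsPerfectCode.seesUniquely {S : Set V} (hS : G.IsPerfectCode S) {c : V → Option ℕ}
    (hc : ∀ u a, c u = some a → u ∈ S) {v u : V} (hvu : G.Adj v u ∨ u = v) (hu : u ∈ S)
    {a : ℕ} (ha : c u = some a) : G.SeesUniquely c v a :=
  ⟨u, ⟨hvu, ha⟩, fun _ h => (hS v).unique ⟨h.1, hc _ _ h.2⟩ ⟨hvu, hu⟩⟩

theorem isPerfectCode_iff_seesUniquely {c : V → Option ℕ} {a : ℕ} :
    G.IsPerfectCode {u | c u = some a} ↔ ∀ v, G.SeesUniquely c v a :=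
  Iff.rfl

theorem cfcnStarChoosable_one_iff : CFCNstarChoosable G 1 ↔ ∃ S, G.IsPerfectCode S := by
  constructor
  · intro hG
    obtain ⟨c, hcL, hc⟩ := hG (fun _ => {0}) (fun _ => Finset.card_singleton 0)
    refine ⟨{u | c u = some 0}, isPerfectCode_iff_seesUniquely.2 fun v => ?_⟩
    obtain ⟨a, ha⟩ : ∃ a, G.SeesUniquely c v a := hc v
    obtain ⟨u, hu⟩ := ha.exists_eq_some
    obtain rfl : a = 0 := Finset.mem_singleton.1 (hcL u a hu)
    exact ha
  · rintro ⟨S, hS⟩ L hL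
    classical
    choose f hf using fun v => Finset.card_eq_one.1 (hL v)
    refine ⟨fun u => if u ∈ S then some (f u) else none, fun u a hu => ?_, fun v => ?_⟩
    · dsimp only at hu
      split_ifs at hu with h
      cases hu
      simp [hf]
    · obtain ⟨u, ⟨hvu, hu⟩, -⟩ := hS v
      refine ⟨f u, hS.seesUniquely (fun w a hw => ?_) hvu hu (if_pos hu)⟩
      by_contra h
      simp [h] at hw

theorem seesUniquely_one_sub_of_not_seesUniquely {c : V → Option ℕ} {v : V} {δ : ℕ}
    (hc : ∀ u a, c u = some a → a < 2) (h : ∃ a, G.SeesUniquely c v a) (hδ : δ < 2)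
    (hv : ¬ G.SeesUniquely c v δ) : G.SeesUniquely c v (1 - δ) := by
  obtain ⟨a, ha⟩ := h
  obtain ⟨u, hu⟩ := ha.exists_eq_some
  have ha2 := hc u a hu
  obtain rfl : a = 1 - δ := by
    have : a ≠ δ := by
      rintro rfl
      exact hv ha
    omega
  exact ha

end SimpleGraph

open SimpleGraph

section HGraph

variable {V : Type*} {G : SimpleGraph V} {p q : {p : Fin 4 × Fin 4 // p.1 < p.2}} {z z' : Bool}
  {u u' : V}

theorem hGraph_not_adj_inl_inl (i j : Fin 4) : ¬ (HGraph G).Adj (.inl i) (.inl j) := by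
  simp [HGraph]

theorem hGraph_adj_inl_inr {l : Fin 4} :
    (HGraph G).Adj (.inl l) (.inr (p, z, u)) ↔ l = p.1.1 ∨ l = p.1.2 := by
  simp [HGraph]

theorem hGraph_adj_inr_inr :
    (HGraph G).Adj (.inr (p, z, u)) (.inr (q, z', u')) ↔ p = q ∧ z = z' ∧ G.Adj u u' := by
  simp only [HGraph, fromRel_adj, ne_eq, Sum.inr.injEq, Prod.mk.injEq]
  constructor
  · rintro ⟨-, h | ⟨rfl, rfl, h⟩⟩
    exacts [h, ⟨rfl, rfl, h.symm⟩]
  · rintro ⟨rfl, rfl, h⟩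
    exact ⟨by simp [h.ne], Or.inl ⟨rfl, rfl, h⟩⟩

theorem hGraph_closedNbhd_inr {y} :
    ((HGraph G).Adj (.inr (p, z, u)) y ∨ y = .inr (p, z, u)) ↔
      y = .inl p.1.1 ∨ y = .inl p.1.2 ∨ ∃ w, (G.Adj u w ∨ w = u) ∧ y = .inr (p, z, w) := by
  rcases y with l | ⟨q, z', w⟩
  · simp [(HGraph G).adj_comm (.inr _), hGraph_adj_inl_inr, eq_comm]
  · simp only [hGraph_adj_inr_inr, Sum.inr.injEq, Prod.mk.injEq, reduceCtorEq, false_or]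
    aesop

theorem hGraph_seesUniquely_inr_iff {c : _ → Option ℕ} {γ : ℕ} (h₁ : c (.inl p.1.1) ≠ some γ)
    (h₂ : c (.inl p.1.2) ≠ some γ) :
    (HGraph G).SeesUniquely c (.inr (p, z, u)) γ ↔
      G.SeesUniquely (fun w => c (.inr (p, z, w))) u γ := by
  simp only [SeesUniquely, hGraph_closedNbhd_inr]
  constructor
  · rintro ⟨_, ⟨rfl | rfl | ⟨w, hw, rfl⟩, hcw⟩, huniq⟩
    · exact absurd hcw h₁
    · exact absurd hcw h₂
    refine ⟨w, ⟨hw, hcw⟩, fun w' hw' => ?_⟩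
    simpa using huniq (.inr (p, z, w')) ⟨Or.inr (Or.inr ⟨w', hw'.1, rfl⟩), hw'.2⟩
  · rintro ⟨w, ⟨hw, hcw⟩, huniq⟩
    refine ⟨.inr (p, z, w), ⟨Or.inr (Or.inr ⟨w, hw, rfl⟩), hcw⟩, ?_⟩
    rintro _ ⟨rfl | rfl | ⟨w', hw', rfl⟩, hcw'⟩
    · exact absurd hcw' h₁
    · exact absurd hcw' h₂
    · rw [huniq w' ⟨hw', hcw'⟩]

theorem cfcnStarChoosable_hGraph_two {S : Set V} (hS : G.IsPerfectCode S) :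
    CFCNstarChoosable (HGraph G) 2 := by
  classical
  intro L hL
  choose w hw using fun i => Finset.card_pos.1 (by rw [hL (.inl i)]; norm_num)
  choose t ht htw using fun x : {p : Fin 4 × Fin 4 // p.1 < p.2} × Bool × V =>
    Finset.exists_mem_ne (by rw [hL (.inr x)]; norm_num) (w x.1.1.1)
  let c : _ → Option ℕ := Sum.elim (fun i => some (w i))
    (fun x => if w x.1.1.1 = w x.1.1.2 ∧ x.2.2 ∈ S then some (t x) else none)
  have hc_inr {x a} (h : c (.inr x) = some a) :
      w x.1.1.1 = w x.1.1.2 ∧ x.2.2 ∈ S ∧ t x = a := by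
    simp only [c, Sum.elim_inr, Option.ite_none_right_eq_some, Option.some.injEq] at h
    exact ⟨h.1.1, h.1.2, h.2⟩
  refine ⟨c, ?_, ?_⟩
  · rintro (i | x) a ha
    · cases ha
      exact hw i
    · obtain ⟨-, -, rfl⟩ := hc_inr ha
      exact ht x
  rintro (i | ⟨p, z, u⟩)
  · refine ⟨w i, .inl i, ⟨Or.inr rfl, rfl⟩, ?_⟩
    rintro (l | x) ⟨hadj | hl, hcx⟩
    · exact absurd hadj (hGraph_not_adj_inl_inl i l)
    · exact hl
    · obtain ⟨hmono, -, htx⟩ := hc_inr hcx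
      rcases hGraph_adj_inl_inr.1 hadj with rfl | rfl
      exacts [absurd htx (htw x), absurd (htx.trans hmono.symm) (htw x)]
    · cases hl
  by_cases hmono : w p.1.1 = w p.1.2
  · obtain ⟨u₀, ⟨hu₀, hu₀S⟩, -⟩ := hS u
    have htu₀ : t (p, z, u₀) ≠ w p.1.1 := htw _
    refine ⟨t (p, z, u₀), (hGraph_seesUniquely_inr_iff ?_ ?_).2
      (hS.seesUniquely (fun w a h => (hc_inr h).2.1) hu₀ hu₀S ?_)⟩
    · exact fun h => htu₀ (Option.some.inj h).symm
    · exact fun h => htu₀ ((Option.some.inj h).symm.trans hmono.symm)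
    · simp [c, hmono, hu₀S]
  · refine ⟨w p.1.1, .inl p.1.1, ⟨Or.inl (hGraph_adj_inl_inr.2 (Or.inl rfl)).symm, rfl⟩, ?_⟩
    rintro y ⟨hy, hcy⟩
    rcases hGraph_closedNbhd_inr.1 hy with rfl | rfl | ⟨w', -, rfl⟩
    · rfl
    · exact absurd (Option.some.inj hcy).symm hmono
    · exact absurd (hc_inr hcy).1 hmono

theorem exists_forall_hGraph_seesUniquely_inr {c : _ → Option ℕ}
    (hc2 : ∀ y a, c y = some a → a < 2) (hc : ∀ y, ∃ a, (HGraph G).SeesUniquely c y a)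
    {p : {p : Fin 4 × Fin 4 // p.1 < p.2}} (hp : c (.inl p.1.1) = c (.inl p.1.2)) :
    ∃ z γ, c (.inl p.1.1) ≠ some γ ∧ ∀ u, (HGraph G).SeesUniquely c (.inr (p, z, u)) γ := by
  have hadj₁ {z u} : (HGraph G).Adj (.inr (p, z, u)) (.inl p.1.1) :=
    (hGraph_adj_inl_inr.2 (Or.inl rfl)).symm
  have hadj₂ {z u} : (HGraph G).Adj (.inr (p, z, u)) (.inl p.1.2) :=
    (hGraph_adj_inl_inr.2 (Or.inr rfl)).symm
  rcases hx : c (.inl p.1.1) with _ | x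
  · obtain ⟨a, ha⟩ : ∃ a, (HGraph G).SeesUniquely c (.inl p.1.1) a := hc _
    have ha2 : a < 2 := let ⟨u, hu⟩ := ha.exists_eq_some; hc2 u a hu
    -- `v_i` is adjacent to both copies, so one of them misses the colour `a`
    obtain ⟨z, hz⟩ : ∃ z, ∀ u, c (.inr (p, z, u)) ≠ some a := by
      by_contra! h
      obtain ⟨u₁, hu₁⟩ := h true
      obtain ⟨u₂, hu₂⟩ := h false
      exact not_seesUniquely_of_ne (by simp) (.inl hadj₁.symm) (.inl hadj₁.symm) hu₁ hu₂ ha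
    refine ⟨z, 1 - a, by simp, fun u => seesUniquely_one_sub_of_not_seesUniquely hc2 (hc _) ha2 ?_⟩
    rw [hGraph_seesUniquely_inr_iff (by simp [hx]) (by simp [← hp, hx])]
    exact fun h => let ⟨w, hw⟩ := h.exists_eq_some; hz w hw
  · have hx2 := hc2 _ _ hx
    refine ⟨true, 1 - x, by simp; omega,
      fun u => seesUniquely_one_sub_of_not_seesUniquely hc2 (hc _) hx2 ?_⟩
    exact not_seesUniquely_of_ne (by simpa using p.2.ne) (.inl hadj₁) (.inl hadj₂) hx (hp ▸ hx)

theorem exists_isPerfectCode_of_cfcnStarChoosable_hGraph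
    (hH : CFCNstarChoosable (HGraph G) 2) : ∃ S, G.IsPerfectCode S := by
  obtain ⟨c, hcL, hc⟩ := hH (fun _ => Finset.range 2) (fun _ => Finset.card_range 2)
  have hc2 (y a) (h : c y = some a) : a < 2 := Finset.mem_range.1 (hcL y a h)
  obtain ⟨i, j, hij, hcij⟩ := Fin.exists_lt_map_eq_of_card_lt
    (t := {none, some 0, some 1}) (by decide) (f := fun i => c (.inl i)) fun i => by
      rcases h : c (.inl i) with _ | a
      · simp
      · have := hc2 _ _ h
        interval_cases a <;> simp
  obtain ⟨z, γ, hγ, hsees⟩ :=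
    exists_forall_hGraph_seesUniquely_inr (G := G) hc2 hc (p := ⟨(i, j), hij⟩) hcij
  exact ⟨_, isPerfectCode_iff_seesUniquely.2 fun u =>
    (hGraph_seesUniquely_inr_iff hγ (hcij ▸ hγ)).1 (hsees u)⟩

end HGraph

/-- `G` is 1-CFCN*-choosable iff `H_G` is 2-CFCN*-choosable. -/
theorem stmt_17 {V : Type*} (G : SimpleGraph V) :
    CFCNstarChoosable G 1 ↔ CFCNstarChoosable (HGraph G) 2 := by
  rw [cfcnStarChoosable_one_iff]
  exact ⟨fun ⟨_, hS⟩ => cfcnStarChoosable_hGraph_two hS,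
    exists_isPerfectCode_of_cfcnStarChoosable_hGraph⟩
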